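/- arXiv:1212.1785 — 2 statements merged into one kernel-verified Lean document; each statement's English description precedes it below -/
import Mathlib

section
/- If Q := mut_w(P, F; {G_h}) is a combinatorial mutation of P, then every vertex of Q has the form v_P + ⟨w, v_P⟩·v_F for some lattice point v_P ∈ w_h(P) ∩ N (where h = ⟨w, v_P⟩) and some vertex v_F of F. -/
/-!
An extreme point of a convex hull lies in the generating set, so a vertex `v` of the mutation
lies in some `G h` with `h < 0` or in some `w_h(P) + h • F` with `0 ≤ h`. In the first case `v`
is a lattice vertex of `G h`, and for any vertex `f` of `F` the lattice point `v - h • f` lies in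
`G h + (-h) • F ⊆ w_h(P)`. In the second case an extreme point of a Minkowski sum splits into
extreme points of the summands: `v = p + h • f` with `p` a vertex of `w_h(P)`, hence one of the
lattice points of height `h` spanning it, and `f` a vertex of `F` (an arbitrary one if `h = 0`).
-/

open Set Pointwise

noncomputable section

def pairing {n : ℕ} (w : Fin n → ℤ) (x : Fin n → ℚ) : ℚ :=
  ∑ i, (w i : ℚ) * x i

def IsLatticePt {n : ℕ} (x : Fin n → ℚ) : Prop := ∀ i, ∃ z : ℤ, x i = (z : ℚ)

def IsLatticePolytope {n : ℕ} (P : Set (Fin n → ℚ)) : Prop :=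
  ∃ S : Finset (Fin n → ℚ), (∀ x ∈ S, IsLatticePt x) ∧ P = convexHull ℚ (S : Set (Fin n → ℚ))

def IsPrimitive {n : ℕ} (w : Fin n → ℤ) : Prop := Finset.univ.gcd w = 1

def wSlice {n : ℕ} (w : Fin n → ℤ) (h : ℤ) (P : Set (Fin n → ℚ)) : Set (Fin n → ℚ) :=
  convexHull ℚ {x | x ∈ P ∧ IsLatticePt x ∧ pairing w x = (h : ℚ)}

def mutation {n : ℕ} (w : Fin n → ℤ) (P F : Set (Fin n → ℚ)) (G : ℤ → Set (Fin n → ℚ)) :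
    Set (Fin n → ℚ) :=
  convexHull ℚ ((⋃ h : ℤ, ⋃ _ : h < 0, G h) ∪
    ⋃ h : ℤ, ⋃ _ : 0 ≤ h, (wSlice w h P + (h : ℚ) • F))

def IsMutData {n : ℕ} (w : Fin n → ℤ) (P F : Set (Fin n → ℚ))
    (G : ℤ → Set (Fin n → ℚ)) : Prop :=
  IsLatticePolytope F ∧ F.Nonempty ∧ (∀ x ∈ F, pairing w x = 0) ∧
  ∀ h : ℤ, h < 0 →
    (G h = ∅ ∨ IsLatticePolytope (G h)) ∧
    {v | v ∈ P.extremePoints ℚ ∧ pairing w v = (h : ℚ)} ⊆ G h + (-(h : ℚ)) • F ∧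
    G h + (-(h : ℚ)) • F ⊆ wSlice w h P

def dpair {n : ℕ} (u v : Fin n → ℚ) : ℚ := ∑ i, u i * v i

def dualP {n : ℕ} (P : Set (Fin n → ℚ)) : Set (Fin n → ℚ) := {u | ∀ v ∈ P, -1 ≤ dpair u v}

section ExtremePoints

variable {𝕜 E : Type*} [Field 𝕜] [LinearOrder 𝕜] [IsStrictOrderedRing 𝕜]
  [AddCommGroup E] [Module 𝕜 E]

theorem mem_extremePoints_convexHull_of_notMem_convexHull_sdiff {s : Set E} {x : E}
    (hx : x ∈ s) (hxs : x ∉ convexHull 𝕜 (s \ {x})) :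
    x ∈ (convexHull 𝕜 s).extremePoints 𝕜 := by
  refine ⟨subset_convexHull 𝕜 s hx, fun y hy z hz hyz => ?_⟩
  rcases (s \ {x}).eq_empty_or_nonempty with hempty | hne
  · have hs : s ⊆ {x} := fun t ht => by_contra fun htx => hempty.subset ⟨ht, htx⟩
    exact convexHull_min hs (convex_singleton x) hy
  have hs : s = insert x (s \ {x}) := by rw [insert_sdiff_singleton, insert_eq_of_mem hx]
  rw [hs, convexHull_insert hne, convexJoin_singleton_left] at hy hz
  simp only [mem_iUnion] at hy hz
  obtain ⟨p, hp, α, β, -, hβ, hαβ, rfl⟩ := hy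
  obtain ⟨q, hq, α', β', -, hβ', hαβ', rfl⟩ := hz
  obtain ⟨a, b, ha, hb, hab, hxyz⟩ := hyz
  have hsum : a * α + b * α' + (a * β + b * β') = 1 := by
    linear_combination a * hαβ + b * hαβ' + hab
  -- unless `y = x`, this exhibits `x` as a convex combination of `p` and `q`
  have hcx : (a * β + b * β') • x = (a * β) • p + (b * β') • q := by
    linear_combination (norm := module) hsum • x - hxyz
  rcases (show 0 ≤ a * β + b * β' by positivity).eq_or_lt with hc | hc
  · have hβ0 : β = 0 := by
      have : a * β = 0 := by linarith [mul_nonneg ha.le hβ, mul_nonneg hb.le hβ']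
      exact (mul_eq_zero.1 this).resolve_left ha.ne'
    simp [hβ0, show α = 1 by linarith]
  · refine absurd ?_ hxs
    convert convex_iff_div.1 (convex_convexHull 𝕜 _) hp hq (by positivity) (by positivity) hc
      using 1
    rw [div_eq_inv_mul, div_eq_inv_mul, mul_smul _ (a * β), mul_smul _ (b * β'), ← smul_add,
      ← hcx, inv_smul_smul₀ hc.ne']

theorem Finset.extremePoints_convexHull_nonempty {S : Finset E} (hS : S.Nonempty) :
    ((convexHull 𝕜 (S : Set E)).extremePoints 𝕜).Nonempty := by
  classical
  -- every point of a minimal spanning subset is a vertex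
  obtain ⟨T, ⟨hTS, hST⟩, hmin⟩ := exists_minimal_of_wellFoundedLT
    (fun T : Finset E => T ⊆ S ∧ (S : Set E) ⊆ convexHull 𝕜 (T : Set E))
    ⟨S, subset_rfl, subset_convexHull 𝕜 _⟩
  have hull_eq : convexHull 𝕜 (T : Set E) = convexHull 𝕜 (S : Set E) :=
    (convexHull_mono (by exact_mod_cast hTS)).antisymm
      (convexHull_min hST (convex_convexHull 𝕜 _))
  obtain ⟨x, hx⟩ : T.Nonempty := by
    rw [Finset.nonempty_iff_ne_empty]
    rintro rfl
    obtain ⟨s, hs⟩ := hS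
    simpa using hST hs
  refine ⟨x, hull_eq ▸ mem_extremePoints_convexHull_of_notMem_convexHull_sdiff hx
    fun hxT => ?_⟩
  have hT : (T : Set E) ⊆ convexHull 𝕜 ↑(T.erase x) := fun t ht => by
    rcases eq_or_ne t x with rfl | htx
    · simpa using hxT
    · exact subset_convexHull 𝕜 _ (Finset.mem_erase.2 ⟨htx, ht⟩)
  have := hmin ⟨(T.erase_subset x).trans hTS,
    hST.trans (convexHull_min hT (convex_convexHull 𝕜 _))⟩ (T.erase_subset x)
  exact T.notMem_erase x (this hx)

theorem right_mem_extremePoints_of_add_mem_extremePoints {C D : Set E} {c d : E} (hc : c ∈ C)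
    (hd : d ∈ D) (h : c + d ∈ (C + D).extremePoints 𝕜) : d ∈ D.extremePoints 𝕜 :=
  ⟨hd, fun _ h₁ _ h₂ hseg => add_left_cancel
    (h.2 (add_mem_add hc h₁) (add_mem_add hc h₂) ((mem_openSegment_translate 𝕜 c).2 hseg))⟩

theorem left_mem_extremePoints_of_add_mem_extremePoints {C D : Set E} {c d : E} (hc : c ∈ C)
    (hd : d ∈ D) (h : c + d ∈ (C + D).extremePoints 𝕜) : c ∈ C.extremePoints 𝕜 :=
  right_mem_extremePoints_of_add_mem_extremePoints hd hc (by rwa [add_comm d, add_comm D])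

theorem extremePoints_smul_set {q : 𝕜} (hq : q ≠ 0) (A : Set E) :
    (q • A).extremePoints 𝕜 = q • A.extremePoints 𝕜 := by
  simpa [← Set.image_smul] using
    (image_extremePoints (LinearEquiv.smulOfNeZero 𝕜 E q hq) A).symm

theorem exists_eq_smul_of_mem_extremePoints_smul_set {A : Set E} {q : 𝕜} {d : E}
    (hA : (A.extremePoints 𝕜).Nonempty) (hd : d ∈ (q • A).extremePoints 𝕜) :
    ∃ a ∈ A.extremePoints 𝕜, d = q • a := by
  rcases eq_or_ne q 0 with rfl | hq
  · obtain ⟨a, ha⟩ := hA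
    exact ⟨a, ha, by simpa using zero_smul_set_subset A hd.1⟩
  · rw [extremePoints_smul_set hq] at hd
    obtain ⟨a, ha, rfl⟩ := hd
    exact ⟨a, ha, rfl⟩

end ExtremePoints

section LatticePolytopes

variable {n : ℕ}

theorem isLinearMap_pairing (w : Fin n → ℤ) : IsLinearMap ℚ (pairing w) where
  map_add x y := by simp only [pairing, Pi.add_apply, mul_add, Finset.sum_add_distrib]
  map_smul c x := by simp only [pairing, Pi.smul_apply, smul_eq_mul, Finset.mul_sum, mul_left_comm]

theorem pairing_eq_of_mem_wSlice {w : Fin n → ℤ} {h : ℤ} {P : Set (Fin n → ℚ)}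
    {x : Fin n → ℚ} (hx : x ∈ wSlice w h P) : pairing w x = h :=
  convexHull_min (fun _ hy => hy.2.2) (convex_hyperplane (isLinearMap_pairing w) _) hx

theorem IsLatticePt.add_intCast_smul {x y : Fin n → ℚ} (hx : IsLatticePt x) (hy : IsLatticePt y)
    (k : ℤ) : IsLatticePt (x + (k : ℚ) • y) := fun i => by
  obtain ⟨a, ha⟩ := hx i
  obtain ⟨b, hb⟩ := hy i
  exact ⟨a + k * b, by simp [ha, hb]⟩

theorem IsLatticePolytope.isLatticePt_of_mem_extremePoints {P : Set (Fin n → ℚ)}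
    (hP : IsLatticePolytope P) {v : Fin n → ℚ} (hv : v ∈ P.extremePoints ℚ) :
    IsLatticePt v := by
  obtain ⟨S, hS, rfl⟩ := hP
  exact hS v (extremePoints_convexHull_subset hv)

theorem IsLatticePolytope.extremePoints_nonempty {P : Set (Fin n → ℚ)}
    (hP : IsLatticePolytope P) (hne : P.Nonempty) : (P.extremePoints ℚ).Nonempty := by
  obtain ⟨S, -, rfl⟩ := hP
  exact Finset.extremePoints_convexHull_nonempty (by simpa using hne)

theorem mem_extremePoints_mutation {w : Fin n → ℤ} {P F : Set (Fin n → ℚ)}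
    {G : ℤ → Set (Fin n → ℚ)} {v : Fin n → ℚ}
    (hv : v ∈ (mutation w P F G).extremePoints ℚ) :
    (∃ h < 0, v ∈ (G h).extremePoints ℚ) ∨
      ∃ h, 0 ≤ h ∧ v ∈ (wSlice w h P + (h : ℚ) • F).extremePoints ℚ := by
  have hsub {A : Set (Fin n → ℚ)} (hA : A ⊆ _) : A ⊆ mutation w P F G :=
    hA.trans (subset_convexHull ℚ _)
  rcases extremePoints_convexHull_subset hv with hv' | hv' <;> simp only [mem_iUnion] at hv' <;>
    obtain ⟨h, hh, hvh⟩ := hv'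
  · exact .inl ⟨h, hh, inter_extremePoints_subset_extremePoints_of_subset
      (hsub ((subset_iUnion₂ (s := fun h (_ : h < 0) => G h) h hh).trans subset_union_left))
      ⟨hvh, hv⟩⟩
  · exact .inr ⟨h, hh, inter_extremePoints_subset_extremePoints_of_subset
      (hsub ((subset_iUnion₂ (s := fun h (_ : 0 ≤ h) => wSlice w h P + (h : ℚ) • F) h
        hh).trans subset_union_right)) ⟨hvh, hv⟩⟩

end LatticePolytopes

theorem mutation_vertices_general {n : ℕ} (w : Fin n → ℤ) (P F : Set (Fin n → ℚ))
    (G : ℤ → Set (Fin n → ℚ)) (hdata : IsMutData w P F G) :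
    ∀ v ∈ (mutation w P F G).extremePoints ℚ,
      ∃ h : ℤ, ∃ vP ∈ wSlice w h P, IsLatticePt vP ∧ pairing w vP = (h : ℚ) ∧
        ∃ vF ∈ F.extremePoints ℚ, v = vP + (h : ℚ) • vF := by
  intro v hv
  obtain ⟨hF, hFne, -, hG⟩ := hdata
  obtain ⟨f, hf⟩ := hF.extremePoints_nonempty hFne
  rcases mem_extremePoints_mutation hv with ⟨h, hneg, hvG⟩ | ⟨h, -, hvS⟩
  · obtain ⟨hGpoly, -, hGsub⟩ := hG h hneg
    have hv_lat : IsLatticePt v :=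
      (hGpoly.resolve_left (nonempty_of_mem hvG.1).ne_empty).isLatticePt_of_mem_extremePoints hvG
    have hvP : v + ((-h : ℤ) : ℚ) • f ∈ wSlice w h P :=
      hGsub (add_mem_add hvG.1 (by push_cast; exact smul_mem_smul_set hf.1))
    exact ⟨h, _, hvP, hv_lat.add_intCast_smul (hF.isLatticePt_of_mem_extremePoints hf) (-h),
      pairing_eq_of_mem_wSlice hvP, f, hf, by push_cast; module⟩
  · obtain ⟨p, hp, d, hd, rfl⟩ := hvS.1
    obtain ⟨f', hf', rfl⟩ := exists_eq_smul_of_mem_extremePoints_smul_set ⟨f, hf⟩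
      (right_mem_extremePoints_of_add_mem_extremePoints hp hd hvS)
    obtain ⟨-, hp_lat, hp_pair⟩ :=
      extremePoints_convexHull_subset (left_mem_extremePoints_of_add_mem_extremePoints hp hd hvS)
    exact ⟨h, p, hp, hp_lat, hp_pair, f', hf', rfl⟩

/-- Every vertex of a combinatorial mutation `Q = mut_w(P,F;{G_h})` has the form
`v_P + ⟨w,v_P⟩ • v_F` for some lattice point `v_P ∈ w_h(P)` (where `h = ⟨w,v_P⟩`)
and some vertex `v_F` of `F`. -/
theorem mutation_vertices {n : ℕ} (w : Fin n → ℤ) (P F : Set (Fin n → ℚ))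
    (G : ℤ → Set (Fin n → ℚ)) (hP : IsLatticePolytope P) (hw : IsPrimitive w)
    (hdata : IsMutData w P F G) :
    ∀ v ∈ (mutation w P F G).extremePoints ℚ,
      ∃ h : ℤ, ∃ vP ∈ wSlice w h P, IsLatticePt vP ∧ pairing w vP = (h : ℚ) ∧
        ∃ vF ∈ F.extremePoints ℚ, v = vP + (h : ℚ) • vF :=
  mutation_vertices_general w P F G hdata

end
end

section
/- Combinatorial mutations are well-defined independently of the choice of the polytopes {G_h}: if {G_h} and {G'_h} are two choices of decomposition data for the same width vector w and factor F, then mut_w(P, F; {G_h}) = mut_w(P, F; {G'_h}). -/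
open Set Pointwise

noncomputable section

/-!
The generators of nonnegative height are the same on both sides, so it suffices to show
`G_h ⊆ M' := mut_w(P, F; {G'_h})` for `h < 0`. A vertex `v` of `P` of height `k = ⟨w, v⟩`
satisfies `v + k⁺ f ∈ M' + k⁻ F` for every `f ∈ F`: for `k < 0` by the vertex condition on
`G'_k`, for `k ≥ 0` because `v + k f` is a generator of `M'`. Averaging over a convex combination
of vertices shows that every `y ∈ P` of height `e = ⟨w, y⟩ ≤ 0` satisfies
`y + c F ⊆ M' + (c - e) F = (M' + (-e) F) + c F` for some `c ≥ 0`, and Minkowski cancellation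
gives `y ∈ M' + (-e) F`. For `x ∈ G_h` this yields `x + (-h) F ⊆ w_h(P) ⊆ M' + (-h) F`, and
cancelling once more, `x ∈ M'`.

Cancellation `x + C ⊆ B + C → x ∈ B` holds for `B` closed convex and `C` compact nonempty:
separate `x` from `B` by a functional `f` and look at a point of `C` minimising `f`. Rational
polytopes are not compact, so it is applied to their real convex hulls, and a rational point of
the real convex hull of rational points lies in their rational convex hull (Carathéodory, and
barycentric coordinates with respect to affinely independent rational points are rational).
-/

def piRatCast (κ : Type*) : (κ → ℚ) →ₗ[ℚ] κ → ℝ := (Algebra.linearMap ℚ ℝ).compLeft κ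

section RatCast

variable {κ : Type*}

@[simp]
lemma piRatCast_apply (x : κ → ℚ) (i : κ) : piRatCast κ x i = x i := rfl

lemma piRatCast_injective : Function.Injective (piRatCast κ) := fun x y h =>
  funext fun i => by simpa using congrFun h i

lemma piRatCast_mem_convexHull {A : Set (κ → ℚ)} {x : κ → ℚ} (hx : x ∈ convexHull ℚ A) :
    piRatCast κ x ∈ convexHull ℝ (piRatCast κ '' A) :=
  convexHull_min (t := piRatCast κ ⁻¹' convexHull ℝ (piRatCast κ '' A))
    (fun _ ha => subset_convexHull ℝ _ (mem_image_of_mem _ ha))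
    (((convex_convexHull ℝ _).lift ℚ).linear_preimage (piRatCast κ)) hx

lemma linearIndependent_piRatCast [Finite κ] {ι : Type*} {v : ι → κ → ℚ}
    (hv : LinearIndependent ℚ v) : LinearIndependent ℝ (fun i => piRatCast κ (v i)) :=
  (linearIndependent_algebraMap_comp_iff (R := ℚ) (S := ℝ) (v := v)).2 hv

lemma exists_ratCast_eq_of_linearIndependent [Finite κ] {ι : Type*} [Fintype ι]
    {v : ι → κ → ℚ} (hv : LinearIndependent ℚ v) {W : ι → ℝ} {b : κ → ℚ}
    (hW : ∑ i, W i • piRatCast κ (v i) = piRatCast κ b) : ∃ q : ι → ℚ, ∀ i, (q i : ℝ) = W i := by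
  by_cases hb : b ∈ Submodule.span ℚ (range v)
  · obtain ⟨q, rfl⟩ := (Submodule.mem_span_range_iff_exists_fun ℚ).1 hb
    refine ⟨q, fun i => ?_⟩
    have hqℝ : ∑ i, (q i : ℝ) • piRatCast κ (v i) = ∑ i, W i • piRatCast κ (v i) := by
      rw [hW, map_sum]
      simp only [map_smul, Rat.cast_smul_eq_qsmul]
    exact Fintype.linearIndependent_iffₛ.1 (linearIndependent_piRatCast hv) _ _ hqℝ i
  · have hvb := Fintype.linearIndependent_iff.1 (linearIndependent_piRatCast (hv.option hb))
      (fun o => o.elim (-1) W) (by simp [Fintype.sum_option, hW]) none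
    simp at hvb

lemma mem_convexHull_of_piRatCast_mem [Finite κ] {S : Set (κ → ℚ)} {x : κ → ℚ}
    (hx : piRatCast κ x ∈ convexHull ℝ (piRatCast κ '' S)) : x ∈ convexHull ℚ S := by
  obtain ⟨ι, _, z, W, hzS, hz, hW0, hW1, hWx⟩ := eq_pos_convex_span_of_mem_convexHull hx
  choose z' hz'S hz' using fun i => hzS (mem_range_self i)
  -- `u i = (1, z' i)`: affine independence of the `z i` is linear independence of the `u i`.
  let u : ι → Option κ → ℚ := fun i o => o.elim 1 (z' i)
  have hu : LinearIndependent ℚ u := by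
    refine (linearIndependent_algebraMap_comp_iff (R := ℚ) (S := ℝ) (v := u)).1 ?_
    refine Fintype.linearIndependent_iff.2 fun a ha i => ?_
    refine hz.eq_zero_of_sum_eq_zero (s := Finset.univ) ?_ ?_ i (Finset.mem_univ i)
    · simpa [u] using congrFun ha none
    · ext k
      simpa [u, ← hz'] using congrFun ha (some k)
  have hW : ∑ i, W i • piRatCast _ (u i) = piRatCast _ (fun o => o.elim 1 x) := by
    ext (_ | k)
    · simpa [u] using hW1
    · simpa [u, ← hz'] using congrFun hWx k
  obtain ⟨q, hq⟩ := exists_ratCast_eq_of_linearIndependent hu hW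
  have hq0 : ∀ i, 0 ≤ q i := fun i => by exact_mod_cast (hq i).symm ▸ (hW0 i).le
  have hqu : ∑ i, q i • u i = fun o => o.elim 1 x := piRatCast_injective <| by
    simp only [map_sum, map_smul, ← hW, ← hq, Rat.cast_smul_eq_qsmul]
  have hq1 : ∑ i, q i = 1 := by simpa [u] using congrFun hqu none
  have hqx : ∑ i, q i • z' i = x := by
    ext k
    simpa [u] using congrFun hqu (some k)
  exact hqx ▸ (convex_convexHull ℚ S).sum_mem (fun i _ => hq0 i) hq1
    fun i _ => subset_convexHull ℚ S (hz'S i)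

end RatCast

lemma Convex.mem_of_add_mem_add {E : Type*} [TopologicalSpace E] [AddCommGroup E]
    [IsTopologicalAddGroup E] [Module ℝ E] [ContinuousSMul ℝ E] [LocallyConvexSpace ℝ E]
    {B C : Set E} (hB : Convex ℝ B) (hBc : IsClosed B) (hC : IsCompact C) (hCne : C.Nonempty)
    {x : E} (hx : ∀ c ∈ C, x + c ∈ B + C) : x ∈ B := by
  by_contra hxB
  obtain ⟨f, u, hfx, hfB⟩ := geometric_hahn_banach_point_closed hB hBc hxB
  obtain ⟨c, hc, hmin⟩ := hC.exists_isMinOn hCne f.continuous.continuousOn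
  obtain ⟨b, hb, c', hc', hsum⟩ := hx c hc
  have hf := congrArg f hsum
  rw [map_add, map_add] at hf
  linarith [hfB b hb, isMinOn_iff.1 hmin c' hc']

def IsPolytope (𝕜 : Type*) {E : Type*} [Field 𝕜] [LinearOrder 𝕜] [AddCommGroup E] [Module 𝕜 E]
    (A : Set E) : Prop :=
  ∃ S : Set E, S.Finite ∧ A = convexHull 𝕜 S

namespace IsPolytope

variable {𝕜 E : Type*} [Field 𝕜] [LinearOrder 𝕜] [AddCommGroup E] [Module 𝕜 E]
  {A B : Set E}

lemma convex (hA : IsPolytope 𝕜 A) : Convex 𝕜 A := by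
  obtain ⟨S, -, rfl⟩ := hA
  exact convex_convexHull 𝕜 S

lemma add [IsStrictOrderedRing 𝕜] (hA : IsPolytope 𝕜 A) (hB : IsPolytope 𝕜 B) :
    IsPolytope 𝕜 (A + B) := by
  obtain ⟨S, hS, rfl⟩ := hA
  obtain ⟨T, hT, rfl⟩ := hB
  exact ⟨S + T, hS.add hT, (convexHull_add S T).symm⟩

lemma smul (hA : IsPolytope 𝕜 A) (a : 𝕜) : IsPolytope 𝕜 (a • A) := by
  obtain ⟨S, hS, rfl⟩ := hA
  exact ⟨a • S, hS.smul_set, (convexHull_smul a S).symm⟩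

lemma convexHull_iUnion {ι : Type*} {A : ι → Set E} (hA : ∀ i, IsPolytope 𝕜 (A i))
    (hfin : {i | (A i).Nonempty}.Finite) : IsPolytope 𝕜 (convexHull 𝕜 (⋃ i, A i)) := by
  choose S hS hAS using hA
  refine ⟨⋃ i, S i, ?_, ?_⟩
  · refine (hfin.biUnion fun i _ => hS i).subset fun x hx => ?_
    obtain ⟨i, hxi⟩ := mem_iUnion.1 hx
    exact mem_biUnion (show (A i).Nonempty from hAS i ▸ ⟨x, subset_convexHull 𝕜 _ hxi⟩) hxi
  · simp only [hAS]
    exact (convexHull_min (iUnion_subset fun i => convexHull_mono (subset_iUnion S i))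
      (convex_convexHull 𝕜 _)).antisymm
      (convexHull_mono (iUnion_mono fun i => subset_convexHull 𝕜 _))

lemma mem_of_add_mem_add {κ : Type*} [Finite κ] {B C : Set (κ → ℚ)} (hB : IsPolytope ℚ B)
    (hC : IsPolytope ℚ C) (hCne : C.Nonempty) {x : κ → ℚ} (hx : ∀ c ∈ C, x + c ∈ B + C) :
    x ∈ B := by
  obtain ⟨X, hX, rfl⟩ := hB
  obtain ⟨T, hT, rfl⟩ := hC
  have hxℝ : ∀ c ∈ convexHull ℝ (piRatCast κ '' T),
      piRatCast κ x + c ∈ convexHull ℝ (piRatCast κ '' X) + convexHull ℝ (piRatCast κ '' T) := by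
    refine fun c hc => convexHull_min ?_
      (((convex_convexHull ℝ _).add (convex_convexHull ℝ _)).translate_preimage_right _) hc
    rintro _ ⟨t, ht, rfl⟩
    obtain ⟨b, hb, c', hc', hsum⟩ := hx t (subset_convexHull ℚ T ht)
    show piRatCast κ x + piRatCast κ t ∈
      convexHull ℝ (piRatCast κ '' X) + convexHull ℝ (piRatCast κ '' T)
    rw [← map_add (piRatCast κ), ← hsum, map_add]
    exact add_mem_add (piRatCast_mem_convexHull hb) (piRatCast_mem_convexHull hc')
  obtain ⟨c, hc⟩ := hCne
  exact mem_convexHull_of_piRatCast_mem (Convex.mem_of_add_mem_add (convex_convexHull ℝ _)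
    ((hX.image _).isCompact_convexHull ℝ).isClosed ((hT.image _).isCompact_convexHull ℝ)
    ⟨_, piRatCast_mem_convexHull hc⟩ hxℝ)

end IsPolytope

section ExtremePoints

variable {𝕜 E : Type*} [Field 𝕜] [LinearOrder 𝕜] [IsStrictOrderedRing 𝕜] [AddCommGroup E]
  [Module 𝕜 E]

lemma mem_extremePoints_convexHull_insert {s : E} {T : Set E} (hs : s ∉ convexHull 𝕜 T) :
    s ∈ (convexHull 𝕜 (insert s T)).extremePoints 𝕜 := by
  rcases T.eq_empty_or_nonempty with rfl | hT
  · simp [convexHull_singleton]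
  refine mem_extremePoints_iff_left.2 ⟨subset_convexHull 𝕜 _ (mem_insert s T), ?_⟩
  rw [convexHull_insert hT]
  rintro _ hx₁ _ hx₂ ⟨θ₁, θ₂, hθ₁, hθ₂, hθ, hsum⟩
  obtain ⟨s₁, hs₁ : s₁ = s, t₁, ht₁, a₁, b₁, ha₁, hb₁, hab₁, rfl⟩ := mem_convexJoin.1 hx₁
  obtain ⟨s₂, hs₂ : s₂ = s, t₂, ht₂, a₂, b₂, ha₂, hb₂, hab₂, rfl⟩ := mem_convexJoin.1 hx₂
  subst s₁ s₂
  have hcomb : (θ₁ * b₁ + θ₂ * b₂) • s = (θ₁ * b₁) • t₁ + (θ₂ * b₂) • t₂ := by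
    linear_combination (norm := module) -hsum + (θ₁ * hab₁ + θ₂ * hab₂ + hθ) • s
  rcases (add_nonneg (mul_nonneg hθ₁.le hb₁) (mul_nonneg hθ₂.le hb₂)).eq_or_lt with hμ | hμ
  · have hb₁0 : b₁ = 0 := by nlinarith [mul_nonneg hθ₂.le hb₂]
    simp [hb₁0, show a₁ = 1 by linarith]
  · refine absurd ?_ hs
    convert convex_iff_div.1 (convex_convexHull 𝕜 T) ht₁ ht₂ (mul_nonneg hθ₁.le hb₁)
      (mul_nonneg hθ₂.le hb₂) hμ using 1
    rw [div_eq_inv_mul, div_eq_inv_mul, mul_smul, mul_smul _ _ t₂, ← smul_add, ← hcomb, smul_smul,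
      inv_mul_cancel₀ hμ.ne', one_smul]

lemma convexHull_extremePoints_convexHull (S : Finset E) :
    convexHull 𝕜 ((convexHull 𝕜 (S : Set E)).extremePoints 𝕜) = convexHull 𝕜 ↑S := by
  classical
  induction S using Finset.strongInduction with | H S ih =>
  refine (convexHull_min (extremePoints_subset) (convex_convexHull 𝕜 _)).antisymm ?_
  by_cases hext : ↑S ⊆ (convexHull 𝕜 (S : Set E)).extremePoints 𝕜
  · exact convexHull_mono hext
  obtain ⟨s, hsS, hsext⟩ := not_subset.1 hext
  have hs : s ∈ convexHull 𝕜 ↑(S.erase s) := by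
    by_contra h
    refine hsext ?_
    simpa [Finset.coe_erase, insert_sdiff_singleton, insert_eq_of_mem (Finset.mem_coe.2 hsS)] using
      mem_extremePoints_convexHull_insert h
  have hSs : convexHull 𝕜 ↑(S.erase s) = convexHull 𝕜 (S : Set E) := by
    refine (convexHull_mono (Finset.coe_subset.2 (S.erase_subset s))).antisymm
      (convexHull_min (fun x hx => ?_) (convex_convexHull 𝕜 _))
    by_cases hxs : x = s
    · exact hxs ▸ hs
    · exact subset_convexHull 𝕜 _ (Finset.mem_erase.2 ⟨hxs, hx⟩)
  rw [← hSs, ih _ (Finset.erase_ssubset hsS)]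

end ExtremePoints

lemma convex_setOf_mem_add_smul {𝕜 E : Type*} [Field 𝕜] [LinearOrder 𝕜] [IsStrictOrderedRing 𝕜]
    [AddCommGroup E] [Module 𝕜 E] {M F : Set E} (hM : Convex 𝕜 M) (hF : Convex 𝕜 F) :
    Convex 𝕜 {p : 𝕜 × E | 0 ≤ p.1 ∧ p.2 ∈ M + p.1 • F} := by
  rintro ⟨r₁, z₁⟩ ⟨hr₁, hz₁⟩ ⟨r₂, z₂⟩ ⟨hr₂, hz₂⟩ a b ha hb hab
  refine ⟨add_nonneg (mul_nonneg ha hr₁) (mul_nonneg hb hr₂), ?_⟩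
  have hcombo : a • (M + r₁ • F) + b • (M + r₂ • F) = M + (a * r₁ + b * r₂) • F := by
    rw [smul_add, smul_add, smul_smul, smul_smul, add_add_add_comm, ← hM.add_smul ha hb, hab,
      one_smul, hF.add_smul (mul_nonneg ha hr₁) (mul_nonneg hb hr₂)]
  exact hcombo ▸ add_mem_add (smul_mem_smul_set hz₁) (smul_mem_smul_set hz₂)

section

variable {n : ℕ}

def pairingₗ (w : Fin n → ℤ) : (Fin n → ℚ) →ₗ[ℚ] ℚ where
  toFun := pairing w
  map_add' x y := by simp only [pairing, Pi.add_apply, mul_add, Finset.sum_add_distrib]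
  map_smul' a x := by
    simp only [pairing, Pi.smul_apply, smul_eq_mul, RingHom.id_apply, Finset.mul_sum]
    exact Finset.sum_congr rfl fun i _ => mul_left_comm _ _ _

@[simp]
lemma pairingₗ_apply (w : Fin n → ℤ) (x : Fin n → ℚ) : pairingₗ w x = pairing w x := rfl

lemma IsLatticePt.exists_pairing_eq_intCast {x : Fin n → ℚ} (hx : IsLatticePt x)
    (w : Fin n → ℤ) : ∃ k : ℤ, pairing w x = k := by
  choose z hz using hx
  exact ⟨∑ i, w i * z i, by simp [pairing, hz]⟩

namespace IsLatticePolytope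

variable {P : Set (Fin n → ℚ)}

lemma isPolytope (hP : IsLatticePolytope P) : IsPolytope ℚ P := by
  obtain ⟨S, -, rfl⟩ := hP
  exact ⟨S, S.finite_toSet, rfl⟩

lemma finite_isLatticePt (hP : IsLatticePolytope P) : {x | x ∈ P ∧ IsLatticePt x}.Finite := by
  obtain ⟨S, -, rfl⟩ := hP
  set K : ℚ := ∑ s ∈ S, ∑ i, |s i|
  have hbox : convexHull ℚ ↑S ⊆ ⋂ i, (LinearMap.proj i : (Fin n → ℚ) →ₗ[ℚ] ℚ) ⁻¹' Icc (-K) K := by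
    refine convexHull_min (fun s hs => mem_iInter.2 fun i => abs_le.1 ?_)
      (convex_iInter fun i => (convex_Icc _ _).linear_preimage _)
    calc |s i| ≤ ∑ j, |s j| :=
          Finset.single_le_sum (fun j _ => abs_nonneg (s j)) (Finset.mem_univ i)
      _ ≤ K := Finset.single_le_sum (f := fun s : Fin n → ℚ => ∑ j, |s j|)
          (fun s _ => Finset.sum_nonneg fun j _ => abs_nonneg (s j)) hs
  refine ((Set.Finite.pi fun _ => finite_Icc ⌈-K⌉ ⌊K⌋).image fun z i => (z i : ℚ)).subset ?_
  rintro x ⟨hxP, hx⟩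
  choose z hz using hx
  refine ⟨z, fun i _ => ?_, funext fun i => (hz i).symm⟩
  have hxK := mem_iInter.1 (hbox hxP) i
  simp only [mem_preimage, LinearMap.coe_proj, Function.eval, mem_Icc, hz i] at hxK
  exact ⟨Int.ceil_le.2 hxK.1, Int.le_floor.2 hxK.2⟩

end IsLatticePolytope

section Mutation

variable {w : Fin n → ℤ} {P F : Set (Fin n → ℚ)} {G G' : ℤ → Set (Fin n → ℚ)} {h : ℤ}

lemma wSlice_subset_setOf_pairing_eq (hP : Convex ℚ P) :
    wSlice w h P ⊆ {x | x ∈ P ∧ pairing w x = h} :=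
  convexHull_min (fun _ hx => ⟨hx.1, hx.2.2⟩) (hP.inter (convex_hyperplane (pairingₗ w).isLinear _))

lemma IsLatticePolytope.isPolytope_wSlice (hP : IsLatticePolytope P) :
    IsPolytope ℚ (wSlice w h P) :=
  ⟨_, hP.finite_isLatticePt.subset fun _ hx => ⟨hx.1, hx.2.1⟩, rfl⟩

lemma IsLatticePolytope.finite_setOf_wSlice_nonempty (hP : IsLatticePolytope P) :
    {h : ℤ | (wSlice w h P).Nonempty}.Finite := by
  refine ((hP.finite_isLatticePt.image (pairing w)).preimage Int.cast_injective.injOn).subset ?_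
  intro h hh
  obtain ⟨x, hxP, hx, hxh⟩ := convexHull_nonempty_iff.1 hh
  exact ⟨x, ⟨hxP, hx⟩, hxh⟩

lemma isPolytope_mutation (hP : IsLatticePolytope P) (hG : IsMutData w P F G) :
    IsPolytope ℚ (mutation w P F G) := by
  classical
  obtain ⟨hF, hFne, -, hGh⟩ := hG
  rw [mutation, ← iUnion_union_distrib]
  refine IsPolytope.convexHull_iUnion (fun h => ?_)
    ((hP.finite_setOf_wSlice_nonempty (w := w)).subset ?_)
  · by_cases hh : h < 0
    · simp only [iUnion_eq_if, if_pos hh, if_neg (not_le.2 hh), union_empty]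
      rcases (hGh h hh).1 with hGe | hGP
      · exact ⟨∅, finite_empty, by rw [hGe, convexHull_empty]⟩
      · exact hGP.isPolytope
    · simp only [iUnion_eq_if, if_neg hh, if_pos (not_lt.1 hh), empty_union]
      exact hP.isPolytope_wSlice.add (hF.isPolytope.smul _)
  · intro h (hne : Set.Nonempty _)
    by_cases hh : h < 0
    · simp only [iUnion_eq_if, if_pos hh, if_neg (not_le.2 hh), union_empty] at hne
      exact (hne.add (hFne.smul_set)).mono (hGh h hh).2.2
    · simp only [iUnion_eq_if, if_neg hh, if_pos (not_lt.1 hh), empty_union] at hne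
      exact hne.of_add_left

lemma subset_mutation_of_neg (hh : h < 0) : G h ⊆ mutation w P F G :=
  fun _ hx => subset_convexHull ℚ _ (Or.inl (mem_iUnion₂.2 ⟨h, hh, hx⟩))

lemma wSlice_add_smul_subset_mutation (hh : 0 ≤ h) :
    wSlice w h P + (h : ℚ) • F ⊆ mutation w P F G :=
  fun _ hx => subset_convexHull ℚ _ (Or.inr (mem_iUnion₂.2 ⟨h, hh, hx⟩))

lemma add_posPart_smul_mem_mutation_add_negPart_smul (hP : IsLatticePolytope P)
    (hG : IsMutData w P F G) {v f : Fin n → ℚ} (hv : v ∈ P.extremePoints ℚ) (hf : f ∈ F) :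
    v + (pairing w v)⁺ • f ∈ mutation w P F G + (pairing w v)⁻ • F := by
  obtain ⟨-, hFne, -, hGh⟩ := hG
  obtain ⟨S, hS, rfl⟩ := hP
  have hvS : IsLatticePt v := hS v (extremePoints_convexHull_subset hv)
  obtain ⟨k, hk⟩ := hvS.exists_pairing_eq_intCast w
  rw [hk]
  rcases lt_or_ge k 0 with hk0 | hk0
  · have hkℚ : (k : ℚ) ≤ 0 := by exact_mod_cast hk0.le
    rw [posPart_eq_zero.2 hkℚ, negPart_eq_neg.2 hkℚ, zero_smul, add_zero]
    exact add_subset_add_right (subset_mutation_of_neg hk0) ((hGh k hk0).2.1 ⟨hv, hk⟩)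
  · have hkℚ : (0 : ℚ) ≤ k := by exact_mod_cast hk0
    rw [posPart_eq_self.2 hkℚ, negPart_eq_zero.2 hkℚ, zero_smul_set hFne, add_zero]
    have hvk : v ∈ wSlice w k (convexHull ℚ ↑S) :=
      subset_convexHull ℚ _ ⟨extremePoints_subset hv, hvS, hk⟩
    exact wSlice_add_smul_subset_mutation hk0 (add_mem_add hvk (smul_mem_smul_set hf))

lemma exists_add_smul_mem_mutation_add_smul (hP : IsLatticePolytope P) (hG : IsMutData w P F G)
    {y : Fin n → ℚ} (hy : y ∈ P) :
    ∃ c : ℚ, 0 ≤ c ∧ ∀ f ∈ F, y + c • f ∈ mutation w P F G + (c - pairing w y) • F := by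
  obtain ⟨S, -, rfl⟩ := id hP
  have hVfin := S.finite_toSet.subset (extremePoints_convexHull_subset (𝕜 := ℚ))
  set V := hVfin.toFinset
  have hyV : y ∈ convexHull ℚ ↑V := by
    rwa [hVfin.coe_toFinset, convexHull_extremePoints_convexHull]
  obtain ⟨a, ha0, ha1, hay⟩ := Finset.mem_convexHull'.1 hyV
  have hpair : pairing w y = ∑ v ∈ V, a v * ((pairing w v)⁺ - (pairing w v)⁻) := by
    simp only [posPart_sub_negPart, ← pairingₗ_apply, ← hay, map_sum, map_smul, smul_eq_mul]
  set c := ∑ v ∈ V, a v * (pairing w v)⁺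
  refine ⟨c, Finset.sum_nonneg fun v hv => mul_nonneg (ha0 v hv) (posPart_nonneg _), fun f hf => ?_⟩
  set z : (Fin n → ℚ) → ℚ × (Fin n → ℚ) := fun v => ((pairing w v)⁻, v + (pairing w v)⁺ • f)
  have hmem : ∑ v ∈ V, a v • z v ∈ {p : ℚ × _ | 0 ≤ p.1 ∧ p.2 ∈ mutation w _ F G + p.1 • F} :=
    (convex_setOf_mem_add_smul (convex_convexHull ℚ _) hG.1.isPolytope.convex).sum_mem ha0 ha1
      fun v hv => ⟨negPart_nonneg _, add_posPart_smul_mem_mutation_add_negPart_smul hP hG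
        (hVfin.mem_toFinset.1 hv) hf⟩
  have hfst : (∑ v ∈ V, a v • z v).1 = c - pairing w y := by
    simp only [z, c, hpair, Prod.fst_sum, Prod.smul_mk, smul_eq_mul, mul_sub,
      Finset.sum_sub_distrib, sub_sub_cancel]
  have hsnd : (∑ v ∈ V, a v • z v).2 = y + c • f := by
    simp only [z, c, Prod.snd_sum, Prod.smul_mk, smul_add, Finset.sum_add_distrib, hay, smul_smul,
      Finset.sum_smul]
  exact hsnd ▸ hfst ▸ hmem.2

lemma mem_mutation_add_smul_of_pairing_nonpos (hP : IsLatticePolytope P)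
    (hG : IsMutData w P F G) {y : Fin n → ℚ} (hy : y ∈ P) (hyw : pairing w y ≤ 0) :
    y ∈ mutation w P F G + (-pairing w y) • F := by
  have hF := hG.1.isPolytope
  obtain ⟨c, hc, hyc⟩ := exists_add_smul_mem_mutation_add_smul hP hG hy
  refine ((isPolytope_mutation hP hG).add (hF.smul _)).mem_of_add_mem_add (hF.smul c)
    hG.2.1.smul_set ?_
  rintro _ ⟨f, hf, rfl⟩
  rw [add_assoc, ← hF.convex.add_smul (neg_nonneg.2 hyw) hc, neg_add_eq_sub]
  exact hyc f hf

lemma subset_mutation_of_isMutData (hP : IsLatticePolytope P) (hG : IsMutData w P F G)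
    (hG' : IsMutData w P F G') (hh : h < 0) : G h ⊆ mutation w P F G' := by
  obtain ⟨hF, hFne, -, hGh⟩ := hG
  intro x hx
  refine (isPolytope_mutation hP hG').mem_of_add_mem_add (hF.isPolytope.smul (-(h : ℚ)))
    hFne.smul_set ?_
  rintro _ ⟨f, hf, rfl⟩
  obtain ⟨hyP, hyw⟩ := wSlice_subset_setOf_pairing_eq hP.isPolytope.convex
    ((hGh h hh).2.2 (add_mem_add hx (smul_mem_smul_set hf)))
  have hyw' : pairing w (x + -(h : ℚ) • f) ≤ 0 := by rw [hyw]; exact_mod_cast hh.le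
  simpa only [hyw] using mem_mutation_add_smul_of_pairing_nonpos hP hG' hyP hyw'

lemma mutation_subset_mutation (hP : IsLatticePolytope P) (hG : IsMutData w P F G)
    (hG' : IsMutData w P F G') : mutation w P F G ⊆ mutation w P F G' :=
  convexHull_min
    (union_subset (iUnion₂_subset fun _ hh => subset_mutation_of_isMutData hP hG hG' hh)
      (iUnion₂_subset fun _ hh => wSlice_add_smul_subset_mutation hh))
    (convex_convexHull ℚ _)

end Mutation

end

theorem mutation_well_defined_general {n : ℕ} (w : Fin n → ℤ) (P F : Set (Fin n → ℚ))
    (G G' : ℤ → Set (Fin n → ℚ)) (hP : IsLatticePolytope P)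
    (hdata : IsMutData w P F G) (hdata' : IsMutData w P F G') :
    mutation w P F G = mutation w P F G' :=
  (mutation_subset_mutation hP hdata hdata').antisymm (mutation_subset_mutation hP hdata' hdata)

/-- Combinatorial mutations are independent of the choice of the polytopes `{G_h}`. -/
theorem mutation_well_defined {n : ℕ} (w : Fin n → ℤ) (P F : Set (Fin n → ℚ))
    (G G' : ℤ → Set (Fin n → ℚ)) (hP : IsLatticePolytope P)
    (h0 : (0 : Fin n → ℚ) ∈ interior P) (hw : IsPrimitive w)
    (hdata : IsMutData w P F G) (hdata' : IsMutData w P F G') :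
    mutation w P F G = mutation w P F G' :=
  mutation_well_defined_general w P F G G' hP hdata hdata'
end
end
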